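/- arXiv:0909.5029 — 7 statements merged into one kernel-verified Lean document; each statement's English description precedes it below -/
import Mathlib

section
/- Let P = {(x, y) ∈ ℝ^n × ℝ^m : Ax + By ≤ b} be a polyhedron. Then the projection of P onto ℝ^n equals {x ∈ ℝ^n : rᵀ(b − Ax) ≥ 0 for all extreme rays r of the cone Q = {v ∈ ℝ^k : v ≥ 0, vᵀB = 0}}, provided Q is pointed (which it is, being contained in the nonnegative orthant). -/
open Matrix

def IsExtremeRay {V : Type*} [AddCommMonoid V] [Module ℝ V] (C : Set V) (r : V) : Prop :=
  r ∈ C ∧ r ≠ 0 ∧ ∀ x ∈ C, ∀ y ∈ C, r = x + y →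
    (∃ a : ℝ, 0 ≤ a ∧ x = a • r) ∧ (∃ b : ℝ, 0 ≤ b ∧ y = b • r)

/-!
Eliminating the variables `y` one at a time (Fourier–Motzkin) proves Farkas' lemma: `B y ≤ c`
is solvable as soon as `vᵀc ≥ 0` for every `v` in the cone `Q = {v ≥ 0 : vᵀB = 0}`. It then
suffices to test extreme rays: among the `v ∈ Q` with `vᵀc < 0` take one of minimal support. If
some nonzero `w ∈ Q` had strictly smaller support, subtracting the largest multiple `t • w` that
keeps `v - t • w ≥ 0` would write `v` as a sum of two elements of `Q` of smaller support, one of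
which still pairs negatively with `c`. So the support of `v` is minimal in `Q \ {0}`, and such
elements of `Q` are extreme rays.
-/

universe u

theorem Finset.exists_between_of_forall_le {α : Type*} [LinearOrder α] [Nonempty α]
    {L U : Finset α} (h : ∀ l ∈ L, ∀ u ∈ U, l ≤ u) :
    ∃ t, (∀ l ∈ L, l ≤ t) ∧ ∀ u ∈ U, t ≤ u := by
  rcases L.eq_empty_or_nonempty with rfl | hL
  · rcases U.eq_empty_or_nonempty with rfl | hU
    · simp
    · exact ⟨U.min' hU, by simp, fun u hu => U.min'_le u hu⟩
  · exact ⟨L.max' hL, fun l hl => L.le_max' l hl,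
      fun u hu => L.max'_le hL _ fun l hl => h l hl u hu⟩

namespace Matrix

variable {R ι κ : Type*}

theorem vecMul_nonneg [Fintype ι] [Semiring R] [PartialOrder R] [IsOrderedRing R] {v : ι → R}
    {M : Matrix ι κ R} (hv : 0 ≤ v) (hM : ∀ i j, 0 ≤ M i j) : 0 ≤ v ᵥ* M :=
  fun j => dotProduct_nonneg_of_nonneg hv fun i => hM i j

theorem mulVec_snoc [CommSemiring R] {m : ℕ} (B : Matrix ι (Fin (m + 1)) R) (y : Fin m → R)
    (t : R) : B *ᵥ Fin.snoc y t = B.submatrix id Fin.castSucc *ᵥ y + t • Bᵀ (Fin.last m) := by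
  ext i
  simp [mulVec, dotProduct, Fin.sum_univ_castSucc, mul_comm]

theorem vecMul_eq_zero_of_castSucc_of_last [Fintype ι] [NonUnitalNonAssocSemiring R] {m : ℕ}
    {B : Matrix ι (Fin (m + 1)) R} {v : ι → R}
    (hcast : v ᵥ* B.submatrix id Fin.castSucc = 0) (hlast : v ⬝ᵥ Bᵀ (Fin.last m) = 0) :
    v ᵥ* B = 0 := by
  funext q
  refine Fin.lastCases ?_ (fun q => ?_) q
  · exact hlast
  · exact congrFun hcast q

end Matrix

section FourierMotzkin

variable {𝕜 : Type*} [Field 𝕜] [LinearOrder 𝕜] [IsStrictOrderedRing 𝕜]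

theorem exists_smul_le_of_pairwise {ι : Type*} [Fintype ι] {β s : ι → 𝕜}
    (hzero : ∀ i, β i = 0 → 0 ≤ s i)
    (hpair : ∀ i j, 0 < β i → β j < 0 → β j * s i ≤ β i * s j) :
    ∃ t : 𝕜, t • β ≤ s := by
  classical
  obtain ⟨t, hlower, hupper⟩ := Finset.exists_between_of_forall_le
    (L := (Finset.univ.filter (β · < 0)).image fun j => s j / β j)
    (U := (Finset.univ.filter (0 < β ·)).image fun i => s i / β i) (by
      simp only [Finset.mem_image, Finset.mem_filter, Finset.mem_univ, true_and]
      rintro _ ⟨j, hj, rfl⟩ _ ⟨i, hi, rfl⟩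
      rw [div_le_iff_of_neg' hj, mul_div_assoc', div_le_iff₀ hi]
      linarith [hpair i j hi hj])
  refine ⟨t, fun i => ?_⟩
  rw [Pi.smul_apply, smul_eq_mul, mul_comm]
  rcases lt_trichotomy (β i) 0 with h | h | h
  · exact (div_le_iff_of_neg' h).1 (hlower _ (Finset.mem_image_of_mem _ (by simpa using h)))
  · simpa [h] using hzero i h
  · exact (le_div_iff₀' h).1 (hupper _ (Finset.mem_image_of_mem _ (by simpa using h)))

theorem exists_fourierMotzkin_multipliers {ι : Type u} [Fintype ι] (β : ι → 𝕜) :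
    ∃ (ι' : Type u) (_ : Fintype ι') (U : Matrix ι' ι 𝕜), (∀ ρ i, 0 ≤ U ρ i) ∧ U *ᵥ β = 0 ∧
      ∀ s, 0 ≤ U *ᵥ s → ∃ t : 𝕜, t • β ≤ s := by
  classical
  -- the rows `l` with `β l = 0`, and for `β i > 0 > β j` the combination
  -- `β i • row j - β j • row i`, in which the eliminated variable cancels
  let U : Matrix ({l // β l = 0} ⊕ ({i // 0 < β i} × {j // β j < 0})) ι 𝕜 :=
    Matrix.of <| Sum.elim (fun l => Pi.single l.1 1)
      (fun p => Pi.single p.2.1 (β p.1.1) + Pi.single p.1.1 (-β p.2.1))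
  have hU_inl (w : ι → 𝕜) l : (U *ᵥ w) (.inl l) = w l :=
    (single_dotProduct w 1 l).trans (one_mul _)
  have hU_inr (w : ι → 𝕜) p : (U *ᵥ w) (.inr p) = β p.1 * w p.2 - β p.2 * w p.1 := by
    change (_ + _) ⬝ᵥ w = _
    rw [add_dotProduct, single_dotProduct, single_dotProduct]
    ring
  refine ⟨_, inferInstance, U, ?_, ?_, fun s hs => ?_⟩
  · rintro (l | ⟨⟨i, hi⟩, ⟨j, hj⟩⟩) t
    · simp only [U, of_apply, Sum.elim_inl, Pi.single_apply]
      split_ifs <;> norm_num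
    · simp only [U, of_apply, Sum.elim_inr, Pi.add_apply, Pi.single_apply]
      split_ifs <;> linarith
  · ext (l | p)
    · exact (hU_inl β l).trans l.2
    · rw [hU_inr]
      exact sub_eq_zero.2 (mul_comm _ _)
  · refine exists_smul_le_of_pairwise (fun l hl => ?_) (fun i j hi hj => ?_)
    · simpa [hU_inl] using hs (.inl ⟨l, hl⟩)
    · simpa [hU_inr] using hs (.inr (⟨i, hi⟩, ⟨j, hj⟩))

theorem Matrix.exists_mulVec_le_of_forall_dotProduct_nonneg {m : ℕ} {ι : Type u} [Fintype ι]
    (B : Matrix ι (Fin m) 𝕜) (c : ι → 𝕜) (h : ∀ v, 0 ≤ v → v ᵥ* B = 0 → 0 ≤ v ⬝ᵥ c) :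
    ∃ y, B *ᵥ y ≤ c := by
  induction m generalizing ι with
  | zero =>
    classical
    refine ⟨0, fun i => ?_⟩
    simpa using h (Pi.single i 1) (Pi.single_nonneg.2 zero_le_one) (Subsingleton.elim _ _)
  | succ m ih =>
    obtain ⟨ι', _, U, hU, hUβ, hU_feasible⟩ := exists_fourierMotzkin_multipliers (Bᵀ (Fin.last m))
    set B₀ := B.submatrix id Fin.castSucc
    obtain ⟨y, hy⟩ := ih (U * B₀) (U *ᵥ c) fun v hv hvB => by
      rw [dotProduct_mulVec]
      refine h _ (vecMul_nonneg hv hU) (vecMul_eq_zero_of_castSucc_of_last ?_ ?_)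
      · rwa [vecMul_vecMul]
      · rw [← dotProduct_mulVec, hUβ, dotProduct_zero]
    obtain ⟨t, ht⟩ := hU_feasible (c - B₀ *ᵥ y) (by
      rw [mulVec_sub, mulVec_mulVec]
      exact sub_nonneg.2 hy)
    refine ⟨Fin.snoc y t, ?_⟩
    calc B *ᵥ Fin.snoc y t = B₀ *ᵥ y + t • Bᵀ (Fin.last m) := mulVec_snoc B y t
      _ ≤ B₀ *ᵥ y + (c - B₀ *ᵥ y) := add_le_add_right ht _
      _ = c := add_sub_cancel _ _

end FourierMotzkin

open Function

namespace Submodule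

variable {ι : Type*}

def nonnegCone (S : Submodule ℝ (ι → ℝ)) : Set (ι → ℝ) := {v | 0 ≤ v ∧ v ∈ S}

variable {S : Submodule ℝ (ι → ℝ)}

theorem exists_sub_smul_mem_nonnegCone_support_ssubset [Finite ι] {v w : ι → ℝ}
    (hv : v ∈ S.nonnegCone) (hw : w ∈ S.nonnegCone) (hw0 : w ≠ 0)
    (hsupp : support w ⊆ support v) :
    ∃ t : ℝ, 0 < t ∧ v - t • w ∈ S.nonnegCone ∧ support (v - t • w) ⊂ support v := by
  obtain ⟨i₀, hi₀, hmin⟩ := Set.exists_min_image (support w) (fun i => v i / w i)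
    (Set.toFinite _) (support_nonempty_iff.2 hw0)
  have hw_pos : ∀ i ∈ support w, 0 < w i := fun i hi => (hw.1 i).lt_of_ne' hi
  have hv_pos : ∀ i ∈ support w, 0 < v i := fun i hi => (hv.1 i).lt_of_ne' (hsupp hi)
  refine ⟨v i₀ / w i₀, div_pos (hv_pos i₀ hi₀) (hw_pos i₀ hi₀),
    ⟨fun i => ?_, S.sub_mem hv.2 (S.smul_mem _ hw.2)⟩, ?_⟩
  · by_cases hi : i ∈ support w
    · simpa using (le_div_iff₀ (hw_pos i hi)).1 (hmin i hi)
    · simpa [notMem_support.1 hi] using hv.1 i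
  · refine (Set.ssubset_iff_of_subset ((support_sub _ _).trans
      (Set.union_subset subset_rfl ((support_smul_subset_right _ _).trans hsupp)))).2
      ⟨i₀, hsupp hi₀, ?_⟩
    simp [div_mul_cancel₀ _ hi₀]

theorem exists_nonneg_smul_eq_of_le [Finite ι] {v x : ι → ℝ} (hv : v ∈ S.nonnegCone)
    (hmin : ∀ w ∈ S.nonnegCone, support w ⊂ support v → w = 0)
    (hx : x ∈ S.nonnegCone) (hxv : x ≤ v) : ∃ a : ℝ, 0 ≤ a ∧ x = a • v := by
  rcases eq_or_ne x 0 with rfl | hx0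
  · exact ⟨0, le_rfl, (zero_smul _ _).symm⟩
  have hsupp : support x ⊆ support v := fun i hi hvi =>
    hi (le_antisymm (hvi ▸ hxv i) (hx.1 i))
  obtain ⟨t, ht, hmem, hss⟩ := exists_sub_smul_mem_nonnegCone_support_ssubset hv hx hx0 hsupp
  have hvx : v = t • x := sub_eq_zero.1 (hmin _ hmem hss)
  exact ⟨t⁻¹, inv_nonneg.2 ht.le, by rw [hvx, smul_smul, inv_mul_cancel₀ ht.ne', one_smul]⟩

theorem isExtremeRay_nonnegCone_of_minimal [Finite ι] {v : ι → ℝ} (hv : v ∈ S.nonnegCone)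
    (hv0 : v ≠ 0) (hmin : ∀ w ∈ S.nonnegCone, support w ⊂ support v → w = 0) :
    IsExtremeRay S.nonnegCone v :=
  ⟨hv, hv0, fun _ hx _ hy hxy =>
    ⟨exists_nonneg_smul_eq_of_le hv hmin hx (hxy ▸ le_add_of_nonneg_right hy.1),
      exists_nonneg_smul_eq_of_le hv hmin hy (hxy ▸ le_add_of_nonneg_left hx.1)⟩⟩

theorem exists_isExtremeRay_nonnegCone_dotProduct_neg [Fintype ι] {v c : ι → ℝ}
    (hv : v ∈ S.nonnegCone) (hvc : v ⬝ᵥ c < 0) :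
    ∃ r, IsExtremeRay S.nonnegCone r ∧ r ⬝ᵥ c < 0 := by
  obtain ⟨r, ⟨hr, hrc⟩, hmin⟩ := exists_minimalFor_of_wellFoundedLT
    (fun r => r ∈ S.nonnegCone ∧ r ⬝ᵥ c < 0) support ⟨v, hv, hvc⟩
  refine ⟨r, isExtremeRay_nonnegCone_of_minimal hr (by rintro rfl; simp at hrc)
    fun w hw hss => ?_, hrc⟩
  by_contra hw0
  obtain ⟨t, ht, hmem, hss'⟩ := exists_sub_smul_mem_nonnegCone_support_ssubset hr hw hw0 hss.1
  have hsplit : r ⬝ᵥ c = (r - t • w) ⬝ᵥ c + t * (w ⬝ᵥ c) := by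
    rw [sub_dotProduct, smul_dotProduct, smul_eq_mul]
    ring
  rcases lt_or_ge (w ⬝ᵥ c) 0 with hwc | hwc
  · exact hss.2 (hmin ⟨hw, hwc⟩ hss.1)
  · exact hss'.2 (hmin ⟨hmem, by linarith [mul_nonneg ht.le hwc]⟩ hss'.1)

end Submodule

/-- Projection lemma: the projection of `P = {(x,y) : Ax + By ≤ b}` onto the `x`-space
is described by the inequalities `rᵀ(b - Ax) ≥ 0` over the extreme rays `r` of the pointed
cone `Q = {v ≥ 0 : vᵀB = 0}`. -/
theorem projection_of_polyhedron_via_extreme_rays {n m k : ℕ}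
    (A : Matrix (Fin k) (Fin n) ℝ) (B : Matrix (Fin k) (Fin m) ℝ) (b : Fin k → ℝ)
    (Q : Set (Fin k → ℝ))
    (hQ : Q = {v | (∀ i, 0 ≤ v i) ∧ Matrix.vecMul v B = 0}) :
    {x : Fin n → ℝ | ∃ y : Fin m → ℝ, ∀ i, A.mulVec x i + B.mulVec y i ≤ b i} =
      {x : Fin n → ℝ | ∀ r, IsExtremeRay Q r → 0 ≤ r ⬝ᵥ (b - A.mulVec x)} := by
  subst hQ
  ext x
  constructor
  · rintro ⟨y, hy⟩ r ⟨⟨hr, hrB⟩, -⟩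
    calc 0 = r ⬝ᵥ B *ᵥ y := by rw [dotProduct_mulVec, hrB, zero_dotProduct]
      _ ≤ r ⬝ᵥ (b - A *ᵥ x) :=
        dotProduct_le_dotProduct_of_nonneg_left (fun i => le_sub_iff_add_le'.2 (hy i)) hr
  · intro H
    obtain ⟨y, hy⟩ := B.exists_mulVec_le_of_forall_dotProduct_nonneg (b - A *ᵥ x)
      fun v hv hvB => by
        by_contra! hneg
        obtain ⟨r, hr, hrc⟩ := Submodule.exists_isExtremeRay_nonnegCone_dotProduct_neg
          (S := LinearMap.ker B.vecMulLinear) ⟨hv, hvB⟩ hneg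
        exact hrc.not_ge (H r hr)
    exact ⟨y, fun i => le_sub_iff_add_le'.1 (hy i)⟩
end

section
/- Let S be a system of linear inequalities over ℝ^d, partitioned into strict inequalities aᵢᵀz < bᵢ (i ∈ I) and non-strict inequalities aⱼᵀz ≤ bⱼ (j ∈ J), and let P be the polyhedron obtained by relaxing all strict inequalities to non-strict ones. If the original system S has a solution, then every point in the relative interior of P is a solution of S. -/
open Matrix Topology Filter

/-- If a system of strict inequalities `aᵢᵀz < bᵢ (i ∈ I)` and non-strict inequalities
`aⱼᵀz ≤ bⱼ (j ∈ J)` has a solution, then every point in the relative interior of the relaxed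
polyhedron `P` (all inequalities made non-strict) is a solution of the original system. -/
theorem relint_point_solves_strict_system {d : ℕ} {I J : Type} [Fintype I] [Fintype J]
    (a₁ : I → Fin d → ℝ) (b₁ : I → ℝ) (a₂ : J → Fin d → ℝ) (b₂ : J → ℝ)
    (P : Set (Fin d → ℝ))
    (hP : P = {z | (∀ i, a₁ i ⬝ᵥ z ≤ b₁ i) ∧ (∀ j, a₂ j ⬝ᵥ z ≤ b₂ j)})
    (hsol : ∃ z : Fin d → ℝ, (∀ i, a₁ i ⬝ᵥ z < b₁ i) ∧ (∀ j, a₂ j ⬝ᵥ z ≤ b₂ j)) :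
    ∀ z ∈ intrinsicInterior ℝ P, (∀ i, a₁ i ⬝ᵥ z < b₁ i) ∧ (∀ j, a₂ j ⬝ᵥ z ≤ b₂ j) := by
  obtain ⟨z₀, hz₀s, hz₀n⟩ := hsol
  have hz₀P : z₀ ∈ P := by
    rw [hP]; exact ⟨fun i => (hz₀s i).le, hz₀n⟩
  intro z hz
  have hzP : z ∈ P := intrinsicInterior_subset hz
  rw [intrinsicInterior] at hz
  obtain ⟨y, hy, rfl⟩ := hz
  have hz₀A : z₀ ∈ affineSpan ℝ P := subset_affineSpan ℝ P hz₀P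
  -- the open interior of the preimage comes from an ambient open set
  obtain ⟨U, hUopen, hUeq⟩ :
      ∃ U : Set (Fin d → ℝ), IsOpen U ∧
        Subtype.val ⁻¹' U = interior (Subtype.val ⁻¹' P : Set (affineSpan ℝ P)) :=
    isOpen_induced_iff.mp isOpen_interior
  have hyU : (y : Fin d → ℝ) ∈ U := by
    have : y ∈ Subtype.val ⁻¹' U := hUeq ▸ hy
    exact this
  -- ambient curve through z₀ and y
  set c : ℝ → (Fin d → ℝ) := fun t => t • ((y : Fin d → ℝ) - z₀) + z₀ with hc
  have hcc : Continuous c := by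
    apply Continuous.add _ continuous_const
    exact continuous_id.smul continuous_const
  have hc1 : c 1 = (y : Fin d → ℝ) := by simp [hc]
  have hnb : ∀ᶠ t in 𝓝 (1 : ℝ), c t ∈ U := by
    have := hcc.continuousAt (x := 1) (hUopen.mem_nhds (hc1 ▸ hyU))
    exact this
  have hnb' : ∀ᶠ t in 𝓝[>] (1 : ℝ), c t ∈ U ∧ 1 < t :=
    (hnb.filter_mono nhdsWithin_le_nhds).and self_mem_nhdsWithin
  obtain ⟨t, htU, ht1⟩ := hnb'.exists
  -- the curve stays in the affine span
  have hctA : c t ∈ affineSpan ℝ P := by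
    have := AffineSubspace.smul_vsub_vadd_mem (affineSpan ℝ P) t
      (subset_affineSpan ℝ P hzP) hz₀A hz₀A
    simpa [hc, vsub_eq_sub, vadd_eq_add] using this
  -- hence c t ∈ P
  have hctP : c t ∈ P := by
    have hmem : (⟨c t, hctA⟩ : affineSpan ℝ P) ∈ Subtype.val ⁻¹' U := htU
    rw [hUeq] at hmem
    exact interior_subset (s := (Subtype.val ⁻¹' P : Set (affineSpan ℝ P))) hmem
  rw [hP] at hctP
  have hzP' : (∀ i, a₁ i ⬝ᵥ (y : Fin d → ℝ) ≤ b₁ i) ∧ (∀ j, a₂ j ⬝ᵥ (y : Fin d → ℝ) ≤ b₂ j) := by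
    rw [← Set.mem_setOf_eq (p := fun z => (∀ i, a₁ i ⬝ᵥ z ≤ b₁ i) ∧ (∀ j, a₂ j ⬝ᵥ z ≤ b₂ j)), ← hP]
    exact hzP
  refine ⟨fun i => ?_, hzP'.2⟩
  have h1 := hctP.1 i
  have h2 := hzP'.1 i
  have h3 := hz₀s i
  have hrw : a₁ i ⬝ᵥ c t
      = t * (a₁ i ⬝ᵥ (y : Fin d → ℝ)) - t * (a₁ i ⬝ᵥ z₀) + a₁ i ⬝ᵥ z₀ := by
    simp [hc, dotProduct_add, dotProduct_smul, dotProduct_sub, smul_eq_mul, mul_sub]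
  rw [hrw] at h1
  nlinarith [mul_pos (sub_pos.mpr ht1) (sub_pos.mpr h3)]
end

section
/- Let P = {(x, y) ∈ ℝ^n × ℝ^m : Ax + By ≤ b} be nonempty and let x̄ be any point of the projection of P onto ℝ^n that lies in the relative interior of this projection. Then the polyhedron P̃ = {y ∈ ℝ^m : By ≤ b − Ax̄} is nonempty and has the same equality set as P, i.e., an index i satisfies (Bᵢ)ᵀy = bᵢ − (Aᵢ)ᵀx̄ for all y ∈ P̃ if and only if i is in eq(P). -/
/-!
If some point `z` of `P` satisfies row `i` strictly, push the projection `x̄` slightly beyond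
itself, away from `z.1`; this stays in the projection because `x̄` is in its relative interior,
so it lifts to some `z' ∈ P`. Then `x̄` lies on the open segment from `z.1` to `z'.1`, so the
matching point of the open segment from `z` to `z'` lies in `P` over `x̄`, and it satisfies
row `i` strictly since `z` does. Its `y`-part is a point of `P̃` where row `i` is not tight.
-/

open Set Topology AffineMap

theorem exists_mem_openSegment_of_mem_intrinsicInterior {E : Type*} [AddCommGroup E] [Module ℝ E]
    [TopologicalSpace E] [IsTopologicalAddGroup E] [ContinuousSMul ℝ E] {s : Set E} {x₀ x : E}
    (hx₀ : x₀ ∈ intrinsicInterior ℝ s) (hx : x ∈ s) : ∃ x' ∈ s, x₀ ∈ openSegment ℝ x x' := by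
  obtain ⟨p, hp, rfl⟩ := mem_intrinsicInterior.1 hx₀
  have hline : ∀ t : ℝ, lineMap x (p : E) t ∈ affineSpan ℝ s := fun t =>
    lineMap_mem t (subset_affineSpan ℝ s hx) p.2
  have hcont : Continuous fun t : ℝ => (⟨lineMap x (p : E) t, hline t⟩ : affineSpan ℝ s) :=
    lineMap_continuous.subtype_mk _
  have hnear : ∀ᶠ t in 𝓝[>] (1 : ℝ), lineMap x (p : E) t ∈ s := by
    have hp1 : p = ⟨lineMap x (p : E) (1 : ℝ), hline 1⟩ := by simp
    exact nhdsWithin_le_nhds (hcont.continuousAt.preimage_mem_nhds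
      (hp1 ▸ mem_interior_iff_mem_nhds.1 hp))
  obtain ⟨t, hts, ht⟩ := (hnear.and self_mem_nhdsWithin).exists
  refine ⟨_, hts, openSegment_eq_image_lineMap ℝ x _ ▸
    ⟨t⁻¹, ⟨by positivity, inv_lt_one_of_one_lt₀ ht⟩, ?_⟩⟩
  rw [lineMap_lineMap_right, inv_mul_cancel₀ (by positivity), lineMap_apply_one]

theorem LinearMap.apply_lt_of_mem_openSegment {E : Type*} [AddCommGroup E] [Module ℝ E]
    (f : E →ₗ[ℝ] ℝ) {x y p : E} {c : ℝ} (hx : f x < c) (hy : f y ≤ c)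
    (hp : p ∈ openSegment ℝ x y) : f p < c := by
  obtain ⟨a, b, ha, hb, hab, rfl⟩ := hp
  simp only [map_add, map_smul, smul_eq_mul]
  have hc : a * c + b * c = c := by rw [← add_mul, hab, one_mul]
  linarith [mul_lt_mul_of_pos_left hx ha, mul_le_mul_of_nonneg_left hy hb.le]

theorem Convex.apply_eq_of_apply_eq_on_fiber {V E : Type*} [AddCommGroup V] [Module ℝ V]
    [AddCommGroup E] [Module ℝ E] [TopologicalSpace E] [IsTopologicalAddGroup E]
    [ContinuousSMul ℝ E] {P : Set V} (hP : Convex ℝ P) (π : V →ₗ[ℝ] E) {x₀ : E}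
    (hx₀ : x₀ ∈ intrinsicInterior ℝ (π '' P)) (f : V →ₗ[ℝ] ℝ) {c : ℝ}
    (hf : ∀ z ∈ P, f z ≤ c) (hfiber : ∀ z ∈ P, π z = x₀ → f z = c) :
    ∀ z ∈ P, f z = c := by
  intro z hz
  by_contra hne
  obtain ⟨_, ⟨z', hz', rfl⟩, hseg⟩ :=
    exists_mem_openSegment_of_mem_intrinsicInterior hx₀ (mem_image_of_mem π hz)
  rw [← π.coe_toAffineMap, ← image_openSegment] at hseg
  obtain ⟨p, hp, hpx₀⟩ := hseg
  exact (f.apply_lt_of_mem_openSegment ((hf z hz).lt_of_ne hne) (hf z' hz') hp).ne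
    (hfiber p (hP.openSegment_subset hz hz' hp) hpx₀)

theorem fixed_projection_point_same_equality_set_general {n m k : ℕ}
    (A : Matrix (Fin k) (Fin n) ℝ) (B : Matrix (Fin k) (Fin m) ℝ) (b : Fin k → ℝ)
    (P : Set ((Fin n → ℝ) × (Fin m → ℝ)))
    (hP : P = {z | ∀ i, A.mulVec z.1 i + B.mulVec z.2 i ≤ b i})
    (xbar : Fin n → ℝ) (hx : xbar ∈ intrinsicInterior ℝ (Prod.fst '' P))
    (Pt : Set (Fin m → ℝ)) (hPt : Pt = {y | ∀ i, B.mulVec y i ≤ b i - A.mulVec xbar i}) :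
    Pt.Nonempty ∧
      ∀ i, (∀ y ∈ Pt, B.mulVec y i = b i - A.mulVec xbar i) ↔
        (∀ z ∈ P, A.mulVec z.1 i + B.mulVec z.2 i = b i) := by
  set L := A.mulVecLin.coprod B.mulVecLin
  have hPL : P = L ⁻¹' Iic b := by
    ext z; simp [hP, L, Pi.le_def]
  have hfiber : ∀ y, y ∈ Pt ↔ (xbar, y) ∈ P := by
    intro y; simp only [hPt, hP, mem_ofPred_eq, le_sub_iff_add_le']
  obtain ⟨z₀, hz₀, rfl⟩ := intrinsicInterior_subset hx
  refine ⟨⟨z₀.2, (hfiber _).2 hz₀⟩, fun i => ⟨fun H => ?_, fun H y hy => ?_⟩⟩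
  · refine (hPL ▸ (convex_Iic b).linear_preimage L).apply_eq_of_apply_eq_on_fiber
      (LinearMap.fst ℝ _ _) hx (LinearMap.proj i ∘ₗ L) ?_ ?_
    · intro z hz
      rw [hP] at hz
      simpa [L] using hz i
    · rintro ⟨x, y⟩ hz (rfl : x = z₀.1)
      simpa [L, eq_sub_iff_add_eq'] using H y ((hfiber y).2 hz)
  · simpa [eq_sub_iff_add_eq'] using H _ ((hfiber y).1 hy)

/-- If `P = {(x,y) : Ax + By ≤ b}` is nonempty and `x̄` lies in the relative interior of the
projection of `P`, then `P̃ = {y : By ≤ b - Ax̄}` is nonempty and has the same equality set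
as `P`. -/
theorem fixed_projection_point_same_equality_set {n m k : ℕ}
    (A : Matrix (Fin k) (Fin n) ℝ) (B : Matrix (Fin k) (Fin m) ℝ) (b : Fin k → ℝ)
    (P : Set ((Fin n → ℝ) × (Fin m → ℝ)))
    (hP : P = {z | ∀ i, A.mulVec z.1 i + B.mulVec z.2 i ≤ b i})
    (hne : P.Nonempty)
    (xbar : Fin n → ℝ) (hx : xbar ∈ intrinsicInterior ℝ (Prod.fst '' P))
    (Pt : Set (Fin m → ℝ)) (hPt : Pt = {y | ∀ i, B.mulVec y i ≤ b i - A.mulVec xbar i}) :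
    Pt.Nonempty ∧
      ∀ i, (∀ y ∈ Pt, B.mulVec y i = b i - A.mulVec xbar i) ↔
        (∀ z ∈ P, A.mulVec z.1 i + B.mulVec z.2 i = b i) :=
  fixed_projection_point_same_equality_set_general A B b P hP xbar hx Pt hPt
end

section
/- In a finite mechanism design setting with n agents, if a social choice function f is strongly implementable by some mechanism Γ, then f can be strongly implemented by an augmented revelation mechanism in which truthful reporting is a Bayesian equilibrium (the Augmented Revelation Principle with payments). -/
variable {n : ℕ}

/-- Expected utility (up to positive scaling by the marginal `pᵢ(t)·|Θᵢ|`) of agent `i`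
of type `t` bidding `s` against the strategy profile `α`, in the mechanism `(S, g, P)`,
with common prior `p` and valuations `V`. -/
def expUtil {X : Type} {Θ S : Fin n → Type} [∀ i, Fintype (Θ i)]
    (V : Fin n → X → (∀ j, Θ j) → ℚ) (p : (∀ j, Θ j) → ℚ)
    (g : (∀ j, S j) → X) (P : (∀ j, S j) → Fin n → ℚ)
    (α : ∀ j, Θ j → S j) (i : Fin n) (t : Θ i) (s : S i) : ℚ :=
  ∑ θ : ∀ j, Θ j,
    p (Function.update θ i t) *
      (V i (g (Function.update (fun j => α j (θ j)) i s)) (Function.update θ i t) +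
        P (Function.update (fun j => α j (θ j)) i s) i)

/-- `α` is a Bayesian equilibrium: for each agent `i` and type `t`, the bid `α i t`
maximizes expected utility. -/
def isEquilibrium {X : Type} {Θ S : Fin n → Type} [∀ i, Fintype (Θ i)]
    (V : Fin n → X → (∀ j, Θ j) → ℚ) (p : (∀ j, Θ j) → ℚ)
    (g : (∀ j, S j) → X) (P : (∀ j, S j) → Fin n → ℚ)
    (α : ∀ j, Θ j → S j) : Prop :=
  ∀ (i : Fin n) (t : Θ i) (s : S i),
    expUtil V p g P α i t s ≤ expUtil V p g P α i t (α i t)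

/-- The mechanism `(S, g, P)` strongly implements `f`: it has at least one equilibrium
and every equilibrium yields the outcome specified by `f`. -/
def stronglyImplements {X : Type} {Θ S : Fin n → Type} [∀ i, Fintype (Θ i)]
    (V : Fin n → X → (∀ j, Θ j) → ℚ) (p : (∀ j, Θ j) → ℚ)
    (g : (∀ j, S j) → X) (P : (∀ j, S j) → Fin n → ℚ)
    (f : (∀ j, Θ j) → X) : Prop :=
  (∃ α, isEquilibrium V p g P α) ∧
    ∀ α, isEquilibrium V p g P α → (fun θ : ∀ j, Θ j => g (fun j => α j (θ j))) = f

/-- Expected utility in a pulled-back mechanism equals expected utility in the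
original mechanism under the composed strategy. -/
lemma expUtil_comp {X : Type} {Θ S S' : Fin n → Type} [∀ i, Fintype (Θ i)]
    (V : Fin n → X → (∀ j, Θ j) → ℚ) (p : (∀ j, Θ j) → ℚ)
    (g : (∀ j, S j) → X) (P : (∀ j, S j) → Fin n → ℚ)
    (σ : ∀ j, S' j → S j) (β : ∀ j, Θ j → S' j) (i : Fin n) (t : Θ i) (s : S' i) :
    expUtil V p (fun s => g fun j => σ j (s j)) (fun s => P fun j => σ j (s j)) β i t s =
      expUtil V p g P (fun j θ => σ j (β j θ)) i t (σ i s) := by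
  unfold expUtil
  refine Finset.sum_congr rfl fun θ _ => ?_
  have : (fun j => σ j (Function.update (fun j => β j (θ j)) i s j)) =
      Function.update (fun j => σ j (β j (θ j))) i (σ i s) := by
    funext j
    exact Function.apply_update (fun k => σ k) (fun j => β j (θ j)) i s j
  simp only [this]

/-- **Augmented Revelation Principle (with payments).** If a social choice function `f`
is strongly implementable, then it can be strongly implemented by an augmented revelation
mechanism (bid sets `Θᵢ ⊕ Tᵢ`) in which truthful reporting is a Bayesian equilibrium. -/
theorem augmented_revelation_principle {X : Type} {Θ : Fin n → Type} [∀ i, Fintype (Θ i)]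
    (V : Fin n → X → (∀ j, Θ j) → ℚ) (p : (∀ j, Θ j) → ℚ) (f : (∀ j, Θ j) → X)
    (h : ∃ (S : Fin n → Type) (g : (∀ j, S j) → X) (P : (∀ j, S j) → Fin n → ℚ),
      stronglyImplements V p g P f) :
    ∃ (T : Fin n → Type) (g : (∀ j, Θ j ⊕ T j) → X) (P : (∀ j, Θ j ⊕ T j) → Fin n → ℚ),
      stronglyImplements V p g P f ∧
        isEquilibrium V p g P (fun i (t : Θ i) => (Sum.inl t : Θ i ⊕ T i)) := by
  obtain ⟨S, g, P, ⟨⟨α, hα⟩, himp⟩⟩ := h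
  set σ : ∀ j, Θ j ⊕ S j → S j := fun j => Sum.elim (α j) id with hσ
  have htruth : isEquilibrium V p (fun s => g fun j => σ j (s j))
      (fun s => P fun j => σ j (s j)) (fun i (t : Θ i) => (Sum.inl t : Θ i ⊕ S i)) := by
    intro i t s
    rw [expUtil_comp, expUtil_comp]
    exact hα i t (σ i s)
  refine ⟨S, fun s => g fun j => σ j (s j), fun s => P fun j => σ j (s j),
    ⟨⟨_, htruth⟩, ?_⟩, htruth⟩
  intro β hβ
  have hβ' : isEquilibrium V p g P (fun j θ => σ j (β j θ)) := by
    intro i t s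
    have := hβ i t (Sum.inr s)
    rwa [expUtil_comp, expUtil_comp] at this
  exact himp _ hβ'
end

section
/- In the single-agent setting, a direct revelation mechanism Γ_(f,P) satisfies the selective elimination condition if and only if it has no bad equilibria. -/
/-- Single-agent setting: a direct revelation mechanism `Γ_(f,P)` satisfies the selective
elimination condition iff it has no bad equilibria (with one agent, selective elimination
of a bad equilibrium is never possible). -/
theorem single_agent_selective_elimination_iff_no_bad_equilibria
    {Θ X : Type} [Fintype Θ] [Fintype X]
    (V : X → Θ → ℚ) (f : Θ → X) (P : Θ → ℚ)
    -- equilibrium predicate for the direct revelation mechanism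
    (isEq : (Θ → Θ) → Prop)
    (hisEq : ∀ α, isEq α ↔ ∀ θ s, V (f s) θ + P s ≤ V (f (α θ)) θ + P (α θ))
    -- a bad equilibrium `α` can be selectively eliminated
    (selElim : (Θ → Θ) → Prop)
    (hselElim : ∀ α, selElim α ↔ ∃ (h : X) (Pb : ℚ),
      (∃ θb, V (f (α θb)) θb + P (α θb) < V h θb + Pb) ∧
      (∀ θ, V h θ + Pb ≤ V (f θ) θ + P θ)) :
    (∀ α, isEq α → f ∘ α ≠ f → selElim α) ↔ ¬ ∃ α, isEq α ∧ f ∘ α ≠ f := by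
  constructor
  · rintro H ⟨α, hα, hbad⟩
    obtain ⟨h, Pb, ⟨θb, hlt⟩, hall⟩ := (hselElim α).mp (H α hα hbad)
    have h1 := hall θb
    have h2 := (hisEq α).mp hα θb θb
    linarith
  · intro H α hα hbad
    exact absurd ⟨α, hα, hbad⟩ H
end

section
/- In the single-agent setting, an incentive compatible direct revelation mechanism Γ_(f,P) has no bad equilibrium if and only if V(f(θ′), θ) + P(θ′) < V(f(θ), θ) + P(θ) for all θ, θ′ ∈ Θ with f(θ) ≠ f(θ′). -/
/-- Single-agent setting: an incentive compatible direct revelation mechanism `Γ_(f,P)` has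
no bad equilibrium iff `V(f(θ'), θ) + P(θ') < V(f(θ), θ) + P(θ)` for all `θ, θ'` with
`f(θ) ≠ f(θ')`. -/
theorem single_agent_no_bad_equilibrium_iff
    {Θ X : Type} [Fintype Θ] [DecidableEq Θ]
    (V : X → Θ → ℚ) (f : Θ → X) (P : Θ → ℚ)
    (hIC : ∀ θ θ' : Θ, V (f θ') θ + P θ' ≤ V (f θ) θ + P θ) :
    (¬ ∃ α : Θ → Θ, (∀ θ s, V (f s) θ + P s ≤ V (f (α θ)) θ + P (α θ)) ∧ f ∘ α ≠ f) ↔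
      ∀ θ θ' : Θ, f θ ≠ f θ' → V (f θ') θ + P θ' < V (f θ) θ + P θ := by
  constructor
  · intro hno θ θ' hne
    by_contra hlt
    push_neg at hlt
    apply hno
    refine ⟨fun s => if s = θ then θ' else s, ?_, ?_⟩
    · intro t s
      by_cases ht : t = θ
      · subst ht
        simp only [if_pos rfl]
        exact le_trans (hIC t s) hlt
      · simp only [if_neg ht]
        exact hIC t s
    · intro h
      apply hne
      have := congrFun h θ
      simpa using this.symm
  · intro hstrict ⟨α, heq, hbad⟩
    apply hbad
    funext θ
    by_contra h
    have h1 := heq θ θ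
    have h2 := hstrict θ (α θ) (Ne.symm h)
    exact absurd h1 (not_le.mpr h2)
end

section
/- In the single-agent setting, a social choice function f : Θ → X is strongly implementable if and only if there exists a payment scheme P : Θ → ℚ satisfying: (a) V(f(θ′), θ) + P(θ′) ≤ V(f(θ), θ) + P(θ) for all θ, θ′ ∈ Θ, and (b) V(f(θ′), θ) + P(θ′) < V(f(θ), θ) + P(θ) for all θ, θ′ with f(θ) ≠ f(θ′). -/
/-- A single-agent mechanism `(S, g, P)` strongly implements `f` if it has at least one
equilibrium and every equilibrium `α` satisfies `g ∘ α = f`. -/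
def StronglyImplements {Θ X S : Type} (V : X → Θ → ℚ) (f : Θ → X)
    (g : S → X) (P : S → ℚ) : Prop :=
  (∃ α : Θ → S, ∀ θ s, V (g s) θ + P s ≤ V (g (α θ)) θ + P (α θ)) ∧
    ∀ α : Θ → S, (∀ θ s, V (g s) θ + P s ≤ V (g (α θ)) θ + P (α θ)) → g ∘ α = f

/-!
A strongly implementing mechanism can be replaced by its direct revelation version with
payments `P ∘ α`, where `α` is any equilibrium. Condition (b) is forced because a type `θ`
indifferent between its own message and that of `θ'` could switch to the latter, giving a
second equilibrium whose outcome `f θ'` at `θ` must equal `f θ`. Conversely, under (a) the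
truthful strategy is an equilibrium of the direct mechanism, and (b) makes every equilibrium
report a type with the same outcome.
-/

section

variable {Θ X S : Type} (V : X → Θ → ℚ) (g : S → X) (P : S → ℚ)

def IsOptimal (θ : Θ) (s : S) : Prop :=
  ∀ s', V (g s') θ + P s' ≤ V (g s) θ + P s

variable {V g P}

theorem IsOptimal.of_le {θ : Θ} {s t : S} (hs : IsOptimal V g P θ s)
    (hle : V (g s) θ + P s ≤ V (g t) θ + P t) : IsOptimal V g P θ t :=
  fun s' => (hs s').trans hle

theorem isOptimal_update [DecidableEq Θ] {α : Θ → S} (hα : ∀ θ, IsOptimal V g P θ (α θ))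
    {θ : Θ} {s : S} (hs : IsOptimal V g P θ s) (t : Θ) :
    IsOptimal V g P t (Function.update α θ s t) := by
  rcases eq_or_ne t θ with rfl | ht
  · rwa [Function.update_self]
  · rw [Function.update_of_ne ht]
    exact hα t

theorem StronglyImplements.eq_of_isOptimal {f : Θ → X} (h : StronglyImplements V f g P)
    {θ : Θ} {s : S} (hs : IsOptimal V g P θ s) : g s = f θ := by
  classical
  obtain ⟨α, hα⟩ := h.1
  have := congrFun (h.2 _ (isOptimal_update hα hs)) θ
  rwa [Function.comp_apply, Function.update_self] at this

theorem stronglyImplements_direct {f : Θ → X} {P : Θ → ℚ}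
    (ha : ∀ θ θ', V (f θ') θ + P θ' ≤ V (f θ) θ + P θ)
    (hb : ∀ θ θ', f θ ≠ f θ' → V (f θ') θ + P θ' < V (f θ) θ + P θ) :
    StronglyImplements V f f P := by
  refine ⟨⟨id, ha⟩, fun α hα => funext fun θ => ?_⟩
  by_contra hne
  exact (hb θ (α θ) (Ne.symm hne)).not_ge (hα θ θ)

end

theorem single_agent_strongly_implementable_iff_general
    {Θ X : Type}
    (V : X → Θ → ℚ) (f : Θ → X) :
    (∃ (S : Type) (g : S → X) (P : S → ℚ), StronglyImplements V f g P) ↔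
      ∃ P : Θ → ℚ,
        (∀ θ θ' : Θ, V (f θ') θ + P θ' ≤ V (f θ) θ + P θ) ∧
        (∀ θ θ' : Θ, f θ ≠ f θ' → V (f θ') θ + P θ' < V (f θ) θ + P θ) := by
  constructor
  · rintro ⟨S, g, P, h⟩
    obtain ⟨α, hα⟩ := h.1
    have hg : ∀ θ, g (α θ) = f θ := congrFun (h.2 α hα)
    refine ⟨P ∘ α, fun θ θ' => ?_, fun θ θ' hne => ?_⟩
    · simpa only [hg, Function.comp_apply] using hα θ (α θ')
    · by_contra! hle
      rw [Function.comp_apply, Function.comp_apply, ← hg θ, ← hg θ'] at hle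
      have hopt : IsOptimal V g P θ (α θ') := IsOptimal.of_le (hα θ) hle
      exact hne ((h.eq_of_isOptimal hopt).symm.trans (hg θ'))
  · rintro ⟨P, ha, hb⟩
    exact ⟨Θ, f, P, stronglyImplements_direct ha hb⟩

/-- Single-agent characterization: `f` is strongly implementable iff there is a payment
scheme `P` with (a) `V(f(θ'), θ) + P(θ') ≤ V(f(θ), θ) + P(θ)` for all `θ, θ'`, and
(b) the strict inequality whenever `f(θ) ≠ f(θ')`. -/
theorem single_agent_strongly_implementable_iff
    {Θ X : Type} [Fintype Θ] [Fintype X]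
    (V : X → Θ → ℚ) (f : Θ → X) :
    (∃ (S : Type) (g : S → X) (P : S → ℚ), StronglyImplements V f g P) ↔
      ∃ P : Θ → ℚ,
        (∀ θ θ' : Θ, V (f θ') θ + P θ' ≤ V (f θ) θ + P θ) ∧
        (∀ θ θ' : Θ, f θ ≠ f θ' → V (f θ') θ + P θ' < V (f θ) θ + P θ) :=
  single_agent_strongly_implementable_iff_general V f
end
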